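/- (Deterministic lasso error bound.) Let Γ̂ be a symmetric p×p matrix and γ̂ ∈ ℝ^p. Let β⋆ ∈ ℝ^p have support S of size s, and suppose: (i) restricted eigenvalue condition bᵀΓ̂b ≥ α‖b‖₂² − τ‖b‖₁² for all b ∈ ℝ^p, with sτ ≤ α/32; (ii) deviation condition ‖γ̂ − Γ̂β⋆‖_∞ ≤ λ/4 for some λ > 0. Let β̂ be any minimizer over ℝ^p of the objective β ↦ −2βᵀγ̂ + βᵀΓ̂β + λ‖β‖₁. Then ‖β̂ − β⋆‖₂ ≤ 16√s · λ / α. -/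

import Mathlib

open Finset Matrix

noncomputable def l1 {n : ℕ} (v : Fin n → ℝ) : ℝ := ∑ i, |v i|
noncomputable def l2 {n : ℕ} (v : Fin n → ℝ) : ℝ := Real.sqrt (∑ i, (v i) ^ 2)
noncomputable def linf {n : ℕ} (v : Fin n → ℝ) : ℝ := ⨆ i, |v i|

/-!
Write `Δ = β̂ - β⋆` and `D = ∑ i ∈ S, |Δ i|`. Comparing the objective at `β̂` and at `β⋆`, with the
deviation bound and the triangle inequality on and off `S`, gives the basic inequality
`ΔᵀΓΔ ≤ 2λD - (λ/2)‖Δ‖₁`. A minimiser can only exist if `Γ` is positive semidefinite, so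
`Δ` lies in the cone `‖Δ‖₁ ≤ 4D ≤ 4√s‖Δ‖₂`; there `sτ ≤ α/32` makes the restricted eigenvalue
condition give `ΔᵀΓΔ ≥ (α/2)‖Δ‖₂²`, and together with `ΔᵀΓΔ ≤ 2λ√s‖Δ‖₂` this yields
`‖Δ‖₂ ≤ 4√sλ/α`.
-/

theorem Matrix.IsSymm.dotProduct_mulVec_comm {ι R : Type*} [Fintype ι] [CommSemiring R]
    {A : Matrix ι ι R} (hA : A.IsSymm) (x y : ι → R) : x ⬝ᵥ A *ᵥ y = y ⬝ᵥ A *ᵥ x := by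
  rw [dotProduct_mulVec, ← mulVec_transpose, hA.eq, dotProduct_comm]

theorem Matrix.IsSymm.dotProduct_mulVec_add_self {ι R : Type*} [Fintype ι] [CommRing R]
    {A : Matrix ι ι R} (hA : A.IsSymm) (x y : ι → R) :
    (x + y) ⬝ᵥ A *ᵥ (x + y) = x ⬝ᵥ A *ᵥ x + 2 * (y ⬝ᵥ A *ᵥ x) + y ⬝ᵥ A *ᵥ y := by
  simp only [mulVec_add, dotProduct_add, add_dotProduct, hA.dotProduct_mulVec_comm x y]
  ring

section Norms

variable {n : ℕ}

theorem l1_nonneg (v : Fin n → ℝ) : 0 ≤ l1 v :=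
  sum_nonneg fun _ _ => abs_nonneg _

theorem l1_add_le (v w : Fin n → ℝ) : l1 (v + w) ≤ l1 v + l1 w := by
  rw [l1, l1, l1, ← sum_add_distrib]
  exact sum_le_sum fun _ _ => abs_add_le _ _

theorem l1_smul (t : ℝ) (v : Fin n → ℝ) : l1 (t • v) = |t| * l1 v := by
  simp only [l1, mul_sum, Pi.smul_apply, smul_eq_mul, abs_mul]

theorem abs_le_linf (v : Fin n → ℝ) (i : Fin n) : |v i| ≤ linf v :=
  le_ciSup (f := fun i => |v i|) (Set.finite_range _).bddAbove i

theorem dotProduct_le_l1_mul_linf (v w : Fin n → ℝ) : v ⬝ᵥ w ≤ l1 v * linf w := by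
  rw [dotProduct, l1, sum_mul]
  refine sum_le_sum fun i _ => ?_
  calc v i * w i ≤ |v i| * |w i| := by rw [← abs_mul]; exact le_abs_self _
    _ ≤ |v i| * linf w := by gcongr; exact abs_le_linf w i

theorem sum_abs_le_sqrt_card_mul_l2 (S : Finset (Fin n)) (v : Fin n → ℝ) :
    ∑ i ∈ S, |v i| ≤ Real.sqrt #S * l2 v := by
  rw [l2, ← Real.sqrt_mul (Nat.cast_nonneg _),
    Real.le_sqrt (sum_nonneg fun _ _ => abs_nonneg _) (by positivity)]
  calc (∑ i ∈ S, |v i|) ^ 2 ≤ (#S : ℝ) * ∑ i ∈ S, |v i| ^ 2 :=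
      sq_sum_le_card_mul_sum_sq (s := S) (f := fun i => |v i|)
    _ ≤ #S * ∑ i, v i ^ 2 := by
      simp only [sq_abs]
      gcongr
      exact subset_univ S

theorem l1_sub_l1_add_le {S : Finset (Fin n)} {b : Fin n → ℝ} (hS : ∀ i ∉ S, b i = 0)
    (d : Fin n → ℝ) : l1 b - l1 (b + d) ≤ 2 * ∑ i ∈ S, |d i| - l1 d := by
  have hterm : ∀ i, |b i| - |b i + d i| ≤ (if i ∈ S then 2 * |d i| else 0) - |d i| := by
    intro i
    by_cases hi : i ∈ S
    · rw [if_pos hi]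
      have h := abs_sub_abs_le_abs_sub (b i) (b i + d i)
      rw [sub_add_cancel_left, abs_neg] at h
      linarith
    · simp [hi, hS i hi]
  calc l1 b - l1 (b + d) = ∑ i, (|b i| - |b i + d i|) := by
        rw [l1, l1, ← sum_sub_distrib]; rfl
    _ ≤ ∑ i, ((if i ∈ S then 2 * |d i| else 0) - |d i|) := sum_le_sum fun i _ => hterm i
    _ = 2 * ∑ i ∈ S, |d i| - l1 d := by
        rw [sum_sub_distrib, sum_ite_mem, univ_inter, mul_sum, l1]

end Norms

theorem nonneg_of_forall_pos_mul_add_nonneg {v C : ℝ} (h : ∀ t > 0, 0 ≤ t * v + C) : 0 ≤ v := by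
  by_contra! hv
  have ht : 0 < (|C| + 1) / -v := div_pos (by positivity) (neg_pos.mpr hv)
  have htv : (|C| + 1) / -v * v = -(|C| + 1) := by field_simp [hv.ne]
  linarith [h _ ht, le_abs_self C]

noncomputable def lassoObjective {n : ℕ} (Γ : Matrix (Fin n) (Fin n) ℝ) (γ : Fin n → ℝ) (lam : ℝ)
    (β : Fin n → ℝ) : ℝ :=
  -2 * (β ⬝ᵥ γ) + β ⬝ᵥ Γ *ᵥ β + lam * l1 β

section Lasso

variable {n : ℕ} {Γ : Matrix (Fin n) (Fin n) ℝ} {γ : Fin n → ℝ} {lam : ℝ}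

theorem lassoObjective_add_sub (hΓ : Γ.IsSymm) (β Δ : Fin n → ℝ) :
    lassoObjective Γ γ lam (β + Δ) - lassoObjective Γ γ lam β =
      Δ ⬝ᵥ Γ *ᵥ Δ - 2 * (Δ ⬝ᵥ (γ - Γ *ᵥ β)) + lam * (l1 (β + Δ) - l1 β) := by
  simp only [lassoObjective, hΓ.dotProduct_mulVec_add_self, add_dotProduct, dotProduct_sub]
  ring

/-- Along a ray from the minimiser the objective grows like `t ^ 2 * bᵀΓb` plus a term linear in
`t`, so a negative direction of `Γ` would make it unbounded below. -/
theorem dotProduct_mulVec_self_nonneg_of_forall_le (hΓ : Γ.IsSymm) (hlam : 0 ≤ lam)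
    {βhat : Fin n → ℝ} (hmin : ∀ β, lassoObjective Γ γ lam βhat ≤ lassoObjective Γ γ lam β)
    (b : Fin n → ℝ) : 0 ≤ b ⬝ᵥ Γ *ᵥ b := by
  refine nonneg_of_forall_pos_mul_add_nonneg
    (C := -2 * (b ⬝ᵥ (γ - Γ *ᵥ βhat)) + lam * l1 b) fun t ht => nonneg_of_mul_nonneg_right ?_ ht
  have hgrowth := lassoObjective_add_sub (γ := γ) (lam := lam) hΓ βhat (t • b)
  simp only [smul_dotProduct, dotProduct_smul, mulVec_smul, smul_eq_mul] at hgrowth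
  have hl1 : l1 (βhat + t • b) - l1 βhat ≤ t * l1 b := by
    have htri := l1_add_le βhat (t • b)
    rw [l1_smul, abs_of_pos ht] at htri
    linarith
  have hpen := mul_le_mul_of_nonneg_left hl1 hlam
  linarith [hmin (βhat + t • b)]

theorem lasso_basic_inequality (hΓ : Γ.IsSymm) (hlam : 0 ≤ lam) {S : Finset (Fin n)}
    {βstar : Fin n → ℝ} (hS : ∀ i ∉ S, βstar i = 0) (hdev : linf (γ - Γ *ᵥ βstar) ≤ lam / 4)
    {Δ : Fin n → ℝ} (hmin : lassoObjective Γ γ lam (βstar + Δ) ≤ lassoObjective Γ γ lam βstar) :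
    Δ ⬝ᵥ Γ *ᵥ Δ ≤ 2 * lam * ∑ i ∈ S, |Δ i| - lam / 2 * l1 Δ := by
  have hexp := lassoObjective_add_sub (γ := γ) (lam := lam) hΓ βstar Δ
  have hnoise : Δ ⬝ᵥ (γ - Γ *ᵥ βstar) ≤ l1 Δ * (lam / 4) :=
    (dotProduct_le_l1_mul_linf _ _).trans (by gcongr; exact l1_nonneg Δ)
  have hpen := mul_le_mul_of_nonneg_left (l1_sub_l1_add_le hS Δ) hlam
  linarith

end Lasso

/-- Read with `E = ‖Δ‖₂`, `L = ‖Δ‖₁`, `D = ∑ i ∈ S, |Δ i|`, `Q = ΔᵀΓΔ` and `r = √s`. -/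
theorem le_of_basic_inequality_of_restricted_eigenvalue {α τ lam r Q E L D : ℝ} (hα : 0 < α)
    (hτ : 0 ≤ τ) (hlam : 0 < lam) (hr : 0 ≤ r) (hrτ : r ^ 2 * τ ≤ α / 32) (hL : 0 ≤ L)
    (hQ0 : 0 ≤ Q) (hQ : Q ≤ 2 * lam * D - lam / 2 * L) (hRE : α * E ^ 2 - τ * L ^ 2 ≤ Q)
    (hD : D ≤ r * E) : E ≤ 4 * r * lam / α := by
  have hcone : L ≤ 4 * (r * E) := by nlinarith
  have hτL : τ * L ^ 2 ≤ α / 2 * E ^ 2 :=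
    calc τ * L ^ 2 ≤ τ * (4 * (r * E)) ^ 2 := by gcongr
      _ = 16 * (r ^ 2 * τ) * E ^ 2 := by ring
      _ ≤ 16 * (α / 32) * E ^ 2 := by gcongr
      _ = α / 2 * E ^ 2 := by ring
  have hcurv : α / 2 * E ^ 2 ≤ 2 * lam * (r * E) := by nlinarith
  rw [le_div_iff₀ hα]
  nlinarith [mul_nonneg hr hlam.le]

theorem stmt_2 {p : ℕ} (Gam : Matrix (Fin p) (Fin p) ℝ) (hGam : Gam.IsSymm)
    (γ βstar βhat : Fin p → ℝ) (α τ lam : ℝ) (hα : 0 < α) (hτ : 0 < τ) (hlam : 0 < lam)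
    (s : ℕ) (hs : (Finset.univ.filter fun i => βstar i ≠ 0).card = s)
    (hsτ : (s : ℝ) * τ ≤ α / 32)
    (hRE : ∀ b : Fin p → ℝ, b ⬝ᵥ Gam.mulVec b ≥ α * l2 b ^ 2 - τ * l1 b ^ 2)
    (hdev : linf (fun i => γ i - Gam.mulVec βstar i) ≤ lam / 4)
    (hmin : ∀ β : Fin p → ℝ,
      -2 * (βhat ⬝ᵥ γ) + βhat ⬝ᵥ Gam.mulVec βhat + lam * l1 βhat ≤
      -2 * (β ⬝ᵥ γ) + β ⬝ᵥ Gam.mulVec β + lam * l1 β) :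
    l2 (βhat - βstar) ≤ 16 * Real.sqrt s * lam / α := by
  set S := univ.filter fun i => βstar i ≠ 0
  have hS : ∀ i ∉ S, βstar i = 0 := fun i hi => by simpa [S] using hi
  have hbasic := lasso_basic_inequality hGam hlam.le hS hdev (Δ := βhat - βstar)
    (by rw [add_sub_cancel]; exact hmin βstar)
  have hQ0 := dotProduct_mulVec_self_nonneg_of_forall_le hGam hlam.le hmin (βhat - βstar)
  have hD := sum_abs_le_sqrt_card_mul_l2 S (βhat - βstar)
  rw [hs] at hD
  have hsτ' : Real.sqrt s ^ 2 * τ ≤ α / 32 := by rwa [Real.sq_sqrt s.cast_nonneg]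
  calc l2 (βhat - βstar) ≤ 4 * Real.sqrt s * lam / α :=
        le_of_basic_inequality_of_restricted_eigenvalue hα hτ.le hlam (Real.sqrt_nonneg _) hsτ'
          (l1_nonneg _) hQ0 hbasic (hRE _) hD
    _ ≤ 16 * Real.sqrt s * lam / α := by gcongr; norm_num
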